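/- arXiv:1605.01002 — 4 statements merged into one kernel-verified Lean document; each statement's English description precedes it below -/
import Mathlib

section
/- Let A, m > 0 and let λ_A ≥ A + m satisfy 2λ_A^3 - 3λ_A^2(A+m) + A^3 = 0. Set a = A/λ_A, so 0 < a < 1. Define w: [-1,1] → ℝ by w(y) = A(-y²/(2a) + |y| + 1/(2a) - 1) for a < |y| ≤ 1 and w(y) = A(a-1)²/(2a) for |y| ≤ a. Then ∫_{-1}^{1} w(y) dy = m. -/
/-!
On `[-1, 1]` the function is `w y = A / (2a) · ((1 - a)² - ((|y| - a)⁺)²)`, which is even, so its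
integral is `2 ∫₀¹ = A (1 - a)² (2 + a) / (3a)`. With `a = A / λ` this equals
`(λ - A)² (2λ + A) / (3λ²) = (2λ³ - 3λ²A + A³) / (3λ²)`, which is `m` by the cubic.
-/

open MeasureTheory intervalIntegral

theorem integral_comp_abs_of_nonneg {f : ℝ → ℝ} {r : ℝ} (hr : 0 ≤ r)
    (hf : IntervalIntegrable f volume 0 r) :
    ∫ x in -r..r, f |x| = 2 * ∫ x in 0..r, f x := by
  have habs : Set.EqOn (fun x => f |x|) f (Set.uIcc 0 r) := fun x hx =>
    congrArg f (abs_of_nonneg (by rw [Set.uIcc_of_le hr] at hx; exact hx.1))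
  have hint : IntervalIntegrable (fun x => f |x|) volume 0 r :=
    hf.congr fun x hx => (habs (Set.uIoc_subset_uIcc hx)).symm
  have hint' : IntervalIntegrable (fun x => f |x|) volume (-r) 0 := by
    simpa using ((IntervalIntegrable.iff_comp_neg).1 hint).symm
  have hneg : ∫ x in -r..0, f |x| = ∫ x in 0..r, f |x| := by
    simpa using (integral_comp_neg (a := 0) (b := r) fun x => f |x|).symm
  rw [← integral_add_adjacent_intervals hint' hint, hneg, integral_congr habs, two_mul]

theorem integral_max_sub_zero_pow_succ {a b c : ℝ} (n : ℕ) (hca : c ≤ a) (hab : a ≤ b) :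
    ∫ x in c..b, max (x - a) 0 ^ (n + 1) = (b - a) ^ (n + 2) / (n + 2) := by
  have hint : ∀ u v, IntervalIntegrable (fun x : ℝ => max (x - a) 0 ^ (n + 1)) volume u v :=
    fun u v => by apply Continuous.intervalIntegrable; fun_prop
  have hleft : ∫ x in c..a, max (x - a) 0 ^ (n + 1) = 0 := by
    refine (integral_congr fun x hx => ?_).trans integral_zero
    rw [Set.uIcc_of_le hca] at hx
    simp [max_eq_right (sub_nonpos.2 hx.2)]
  have hright : ∫ x in a..b, max (x - a) 0 ^ (n + 1) = ∫ x in a..b, (x - a) ^ (n + 1) := by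
    refine integral_congr fun x hx => ?_
    rw [Set.uIcc_of_le hab] at hx
    simp [max_eq_left (sub_nonneg.2 hx.1)]
  rw [← integral_add_adjacent_intervals (hint c a) (hint a b), hleft, hright, zero_add,
    integral_comp_sub_right (fun x => x ^ (n + 1)), sub_self, integral_pow]
  push_cast
  ring

/-- The minimizer as a function of `t = |y|`. -/
noncomputable def minimizerProfile (A a t : ℝ) : ℝ :=
  A / (2 * a) * ((1 - a) ^ 2 - max (t - a) 0 ^ 2)

theorem continuous_minimizerProfile (A a : ℝ) : Continuous (minimizerProfile A a) := by
  unfold minimizerProfile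
  fun_prop

theorem integral_minimizerProfile {A a : ℝ} (ha₀ : 0 ≤ a) (ha₁ : a ≤ 1) :
    ∫ t in 0..1, minimizerProfile A a t = A * (1 - a) ^ 2 * (2 + a) / (6 * a) := by
  have hsq : IntervalIntegrable (fun t : ℝ => max (t - a) 0 ^ 2) volume 0 1 := by
    apply Continuous.intervalIntegrable
    fun_prop
  simp only [minimizerProfile]
  rw [intervalIntegral.integral_const_mul, integral_sub intervalIntegrable_const hsq,
    intervalIntegral.integral_const, integral_max_sub_zero_pow_succ 1 ha₀ ha₁]
  simp only [sub_zero, smul_eq_mul]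
  ring

theorem eqOn_minimizerProfile_abs {A a : ℝ} {w : ℝ → ℝ} (ha : a ≠ 0)
    (hw₁ : ∀ y : ℝ, |y| ≤ a → w y = A * ((a - 1) ^ 2 / (2 * a)))
    (hw₂ : ∀ y : ℝ, a < |y| → |y| ≤ 1 →
      w y = A * (-y ^ 2 / (2 * a) + |y| + 1 / (2 * a) - 1)) :
    Set.EqOn w (fun y => minimizerProfile A a |y|) (Set.uIcc (-1) 1) := by
  intro y hy
  rw [Set.uIcc_of_le (by norm_num), Set.mem_Icc, ← abs_le] at hy
  simp only [minimizerProfile]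
  rcases le_or_gt |y| a with hya | hya
  · rw [hw₁ y hya, max_eq_right (sub_nonpos.2 hya)]
    ring
  · rw [hw₂ y hya hy, max_eq_left (sub_nonneg.2 hya.le), ← sq_abs y]
    field_simp
    ring

theorem minimizer_mass_eq_of_cubic_root {A m lam : ℝ} (hA : A ≠ 0) (hlam : lam ≠ 0)
    (hroot : 2 * lam ^ 3 - 3 * lam ^ 2 * (A + m) + A ^ 3 = 0) :
    2 * (A * (1 - A / lam) ^ 2 * (2 + A / lam) / (6 * (A / lam))) = m := by
  field_simp
  linear_combination 2 * hroot

/-- Let `A, m > 0` and `λ_A ≥ A + m` satisfy `2λ_A³ - 3λ_A²(A+m) + A³ = 0`.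
Set `a = A/λ_A`; then `0 < a < 1`, and the piecewise function `w` (equal to
`A(-y²/(2a) + |y| + 1/(2a) - 1)` for `a < |y| ≤ 1` and to `A(a-1)²/(2a)` for
`|y| ≤ a`) satisfies `∫_{-1}^{1} w(y) dy = m`. -/
theorem explicit_minimizer_volume (A m lam a : ℝ) (hA : 0 < A) (hm : 0 < m)
    (hlam : A + m ≤ lam)
    (hroot : 2 * lam ^ 3 - 3 * lam ^ 2 * (A + m) + A ^ 3 = 0)
    (ha : a = A / lam)
    (w : ℝ → ℝ)
    (hw1 : ∀ y : ℝ, |y| ≤ a → w y = A * ((a - 1) ^ 2 / (2 * a)))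
    (hw2 : ∀ y : ℝ, a < |y| → |y| ≤ 1 →
      w y = A * (-y ^ 2 / (2 * a) + |y| + 1 / (2 * a) - 1)) :
    (0 < a ∧ a < 1) ∧ ∫ y in (-1 : ℝ)..1, w y = m := by
  have hlam₀ : 0 < lam := by linarith
  have ha₀ : 0 < a := ha ▸ div_pos hA hlam₀
  have ha₁ : a < 1 := by rw [ha, div_lt_one hlam₀]; linarith
  refine ⟨⟨ha₀, ha₁⟩, ?_⟩
  rw [integral_congr (eqOn_minimizerProfile_abs ha₀.ne' hw1 hw2),
    integral_comp_abs_of_nonneg zero_le_one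
      ((continuous_minimizerProfile A a).intervalIntegrable 0 1),
    integral_minimizerProfile ha₀.le ha₁.le, ha]
  exact minimizer_mass_eq_of_cubic_root hA.ne' hlam₀.ne' hroot
end

section
/- Let A, m > 0 and let w be the function from the explicit 1D solution (w(y) = A(-y²/(2a)+|y|+1/(2a)-1) for a<|y|≤1, w(y)=A(a-1)²/(2a) for |y|≤a, with a=A/λ_A). Then for every v ∈ W_0^{1,2}(-1,1) with ∫_{-1}^1 v = m, one has ∫_{-1}^1 (|v'|²/2 + A|v'|) dy ≥ ∫_{-1}^1 (|w'|²/2 + A|w'|) dy. -/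
/-!
The energy density `F(p) = p ^ 2 / 2 + A * |p|` is convex, and `-(A / a) * y` is a subgradient of
`F` at `w'(y)` for every `y`. Hence `F(v') ≥ F(w') - (A / a) * y * (v' - w')` pointwise, and the
correction term integrates to zero: integrating by parts against the zero boundary values,
`∫ y * v' = -∫ v = -m`, while the cubic equation for `λ_A` says exactly that `∫ y * w' = -m`.
-/

open MeasureTheory Set

theorem intervalIntegral_mul_eq_sub_integral_primitive {f : ℝ → ℝ} {a b : ℝ}
    (hf : IntervalIntegrable f volume a b) :
    ∫ x in a..b, x * f x = b * (∫ t in a..b, f t) - ∫ x in a..b, ∫ t in a..x, f t := by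
  have hP : AbsolutelyContinuousOnInterval (fun x ↦ ∫ t in a..x, f t) a b :=
    hf.absolutelyContinuousOnInterval_intervalIntegral left_mem_uIcc
  have hid : AbsolutelyContinuousOnInterval id a b :=
    (LipschitzWith.id.lipschitzOnWith).absolutelyContinuousOnInterval
  have hderiv : ∫ x in a..b, x * f x = ∫ x in a..b, id x * deriv (fun x ↦ ∫ t in a..x, f t) x := by
    apply intervalIntegral.integral_congr_ae
    filter_upwards [hf.ae_hasDerivAt_integral] with x hx hxab
    rw [(hx (uIoc_subset_uIcc hxab) a left_mem_uIcc).deriv, id]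
  rw [hderiv, hid.integral_mul_deriv_eq_deriv_mul hP]
  simp

noncomputable def energyDensity (A p : ℝ) : ℝ := p ^ 2 / 2 + A * |p|

noncomputable def profileDeriv (A a y : ℝ) : ℝ :=
  if |y| ≤ a then 0 else A * (-y / a + Real.sign y)

theorem energyDensity_add_mul_sub_le {A q s : ℝ} (hs : |s - q| ≤ A)
    (hsq : (s - q) * q = A * |q|) (p : ℝ) :
    energyDensity A q + s * (p - q) ≤ energyDensity A p := by
  unfold energyDensity
  have hsp : (s - q) * p ≤ A * |p| :=
    (le_abs_self _).trans (by rw [abs_mul]; exact mul_le_mul_of_nonneg_right hs (abs_nonneg p))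
  nlinarith [sq_nonneg (p - q)]

section

variable {A a : ℝ}

theorem profileDeriv_eq_of_abs_le {y : ℝ} (hy : |y| ≤ a) : profileDeriv A a y = 0 := if_pos hy

theorem profileDeriv_eq_of_lt (ha : 0 < a) {y : ℝ} (hy : a < y) :
    profileDeriv A a y = A / a * (a - y) := by
  have hy0 : 0 < y := ha.trans hy
  rw [profileDeriv, if_neg (by rw [abs_of_pos hy0]; linarith), Real.sign_of_pos hy0]
  field_simp
  ring

theorem profileDeriv_eq_of_lt_neg (ha : 0 < a) {y : ℝ} (hy : y < -a) :
    profileDeriv A a y = A / a * (-a - y) := by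
  have hy0 : y < 0 := hy.trans (by linarith)
  rw [profileDeriv, if_neg (by rw [abs_of_neg hy0]; linarith), Real.sign_of_neg hy0]
  field_simp
  ring

theorem profileDeriv_eq_clamp (ha : 0 < a) (y : ℝ) :
    profileDeriv A a y = A / a * (max (-a) (min a y) - y) := by
  rcases lt_or_ge a y with hy | hy
  · rw [profileDeriv_eq_of_lt ha hy, min_eq_left hy.le, max_eq_right (by linarith)]
  rcases lt_or_ge y (-a) with hy' | hy'
  · rw [profileDeriv_eq_of_lt_neg ha hy', min_eq_right (by linarith), max_eq_left hy'.le]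
  · rw [profileDeriv_eq_of_abs_le (abs_le.mpr ⟨hy', hy⟩), min_eq_right hy, max_eq_right hy']
    ring

theorem continuous_profileDeriv (ha : 0 < a) : Continuous (profileDeriv A a) := by
  simp_rw [funext (profileDeriv_eq_clamp (A := A) ha)]
  fun_prop

/-- `-(A / a) * y - w'(y)` is a subgradient of `A * |·|` at `w'(y)`: this is the Euler–Lagrange
equation of the constrained problem, with Lagrange multiplier `A / a`. -/
theorem profileDeriv_subgradient (hA : 0 ≤ A) (ha : 0 < a) (y : ℝ) :
    |-(A / a * y) - profileDeriv A a y| ≤ A ∧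
      (-(A / a * y) - profileDeriv A a y) * profileDeriv A a y = A * |profileDeriv A a y| := by
  rcases lt_or_ge a y with hy | hy
  · have hq : profileDeriv A a y = A / a * (a - y) := profileDeriv_eq_of_lt ha hy
    have hq0 : profileDeriv A a y ≤ 0 :=
      hq ▸ mul_nonpos_of_nonneg_of_nonpos (by positivity) (by linarith)
    have hs : -(A / a * y) - profileDeriv A a y = -A := by rw [hq]; field_simp; ring
    rw [hs, abs_neg, abs_of_nonneg hA, abs_of_nonpos hq0]
    exact ⟨le_rfl, by ring⟩
  rcases lt_or_ge y (-a) with hy' | hy'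
  · have hq : profileDeriv A a y = A / a * (-a - y) := profileDeriv_eq_of_lt_neg ha hy'
    have hq0 : 0 ≤ profileDeriv A a y := hq ▸ mul_nonneg (by positivity) (by linarith)
    have hs : -(A / a * y) - profileDeriv A a y = A := by rw [hq]; field_simp; ring
    rw [hs, abs_of_nonneg hA, abs_of_nonneg hq0]
    exact ⟨le_rfl, rfl⟩
  · rw [profileDeriv_eq_of_abs_le (abs_le.mpr ⟨hy', hy⟩), sub_zero, abs_neg, abs_mul,
      abs_of_nonneg (by positivity : 0 ≤ A / a)]
    refine ⟨?_, by simp⟩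
    calc A / a * |y| ≤ A / a * a := by gcongr; exact abs_le.mpr ⟨hy', hy⟩
      _ = A := by field_simp

theorem energyDensity_profileDeriv_le (hA : 0 ≤ A) (ha : 0 < a) (y p : ℝ) :
    energyDensity A (profileDeriv A a y) - A / a * y * (p - profileDeriv A a y) ≤
      energyDensity A p := by
  obtain ⟨hs, hsq⟩ := profileDeriv_subgradient hA ha y
  linarith [energyDensity_add_mul_sub_le hs hsq p]

theorem integral_mul_profileDeriv (ha : 0 < a) (ha1 : a ≤ 1) :
    ∫ y in (-1 : ℝ)..1, y * profileDeriv A a y = -(A * (1 - a) ^ 2 * (a + 2) / (3 * a)) := by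
  have hc : Continuous fun y ↦ y * profileDeriv A a y := by
    have := continuous_profileDeriv (A := A) ha; fun_prop
  have hleft : ∫ y in (-1 : ℝ)..(-a), y * profileDeriv A a y =
      ∫ y in (-1 : ℝ)..(-a), A / a * ((-a) * y - y ^ 2) := by
    refine intervalIntegral.integral_congr fun y hy ↦ ?_
    rw [uIcc_of_le (by linarith)] at hy
    rcases hy.2.lt_or_eq with hy' | rfl
    · rw [profileDeriv_eq_of_lt_neg ha hy']; ring
    · rw [profileDeriv_eq_of_abs_le (by rw [abs_neg, abs_of_pos ha])]; ring
  have hmid : ∫ y in (-a)..a, y * profileDeriv A a y = 0 := by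
    refine (intervalIntegral.integral_congr fun y hy ↦ ?_).trans intervalIntegral.integral_zero
    rw [uIcc_of_le (by linarith)] at hy
    simp [profileDeriv_eq_of_abs_le (abs_le.mpr hy)]
  have hright : ∫ y in a..1, y * profileDeriv A a y = ∫ y in a..1, A / a * (a * y - y ^ 2) := by
    refine intervalIntegral.integral_congr fun y hy ↦ ?_
    rw [uIcc_of_le ha1] at hy
    rcases hy.1.lt_or_eq with hy' | rfl
    · rw [profileDeriv_eq_of_lt ha hy']; ring
    · rw [profileDeriv_eq_of_abs_le (by rw [abs_of_pos ha])]; ring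
  have hi : ∀ c d : ℝ, IntervalIntegrable (fun y ↦ y * profileDeriv A a y) volume c d :=
    hc.intervalIntegrable
  rw [← intervalIntegral.integral_add_adjacent_intervals (hi _ (-a)) (hi _ 1),
    ← intervalIntegral.integral_add_adjacent_intervals (hi _ a) (hi _ 1), hleft, hmid, hright]
  have hpoly : ∀ k c d : ℝ, ∫ y in c..d, A / a * (k * y - y ^ 2) =
      A / a * (k * ((d ^ 2 - c ^ 2) / 2) - (d ^ 3 - c ^ 3) / 3) := by
    intro k c d
    rw [intervalIntegral.integral_const_mul, intervalIntegral.integral_sub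
      ((continuous_const_mul k).intervalIntegrable _ _) ((continuous_pow 2).intervalIntegrable _ _),
      intervalIntegral.integral_const_mul, integral_id, integral_pow]
    norm_num
  rw [hpoly, hpoly]
  field_simp
  ring

theorem integral_energyDensity_profileDeriv_le (hA : 0 ≤ A) (ha : 0 < a) {c d : ℝ} (hcd : c ≤ d)
    {g : ℝ → ℝ} (hg : IntervalIntegrable g volume c d)
    (hg2 : IntervalIntegrable (fun y ↦ g y ^ 2) volume c d)
    (hmom : ∫ y in c..d, y * g y = ∫ y in c..d, y * profileDeriv A a y) :
    ∫ y in c..d, energyDensity A (profileDeriv A a y) ≤ ∫ y in c..d, energyDensity A (g y) := by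
  have hq := continuous_profileDeriv (A := A) ha
  have hEq : IntervalIntegrable (fun y ↦ energyDensity A (profileDeriv A a y)) volume c d := by
    unfold energyDensity; exact Continuous.intervalIntegrable (by fun_prop) _ _
  have hEg : IntervalIntegrable (fun y ↦ energyDensity A (g y)) volume c d :=
    (hg2.div_const 2).add (hg.abs.const_mul A)
  have hyg : IntervalIntegrable (fun y ↦ y * g y) volume c d := hg.continuousOn_mul continuousOn_id
  have hyq : IntervalIntegrable (fun y ↦ y * profileDeriv A a y) volume c d :=
    Continuous.intervalIntegrable (by fun_prop) _ _
  have hcorr_eq : (fun y ↦ A / a * y * (g y - profileDeriv A a y)) =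
      fun y ↦ A / a * (y * g y - y * profileDeriv A a y) := by
    ext y; ring
  have hcorr : IntervalIntegrable (fun y ↦ A / a * y * (g y - profileDeriv A a y)) volume c d :=
    hcorr_eq ▸ (hyg.sub hyq).const_mul _
  have hcorr0 : ∫ y in c..d, A / a * y * (g y - profileDeriv A a y) = 0 := by
    rw [hcorr_eq, intervalIntegral.integral_const_mul, intervalIntegral.integral_sub hyg hyq, hmom,
      sub_self, mul_zero]
  calc ∫ y in c..d, energyDensity A (profileDeriv A a y)
      = ∫ y in c..d, energyDensity A (profileDeriv A a y) -
          A / a * y * (g y - profileDeriv A a y) := by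
        rw [intervalIntegral.integral_sub hEq hcorr, hcorr0, sub_zero]
    _ ≤ ∫ y in c..d, energyDensity A (g y) :=
        intervalIntegral.integral_mono_on hcd (hEq.sub hcorr) hEg
          fun y _ ↦ energyDensity_profileDeriv_le hA ha y (g y)

end

/-- The explicit profile `w` (with derivative `w'(y) = 0` for `|y| ≤ a` and
`w'(y) = A(-y/a + sign y)` for `a < |y|`) minimizes the energy
`ε_A(v) = ∫_{-1}^1 |v'|²/2 + A|v'|` among all `v ∈ W₀^{1,2}(-1,1)` with
`∫_{-1}^1 v = m`.  A `W₀^{1,2}` function is encoded by a representative `v`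
given as the primitive of its (square integrable) weak derivative `dv`, with
zero boundary values. -/
theorem explicit_profile_minimizes (A m lam a : ℝ) (hA : 0 < A) (hm : 0 < m)
    (hlam : A + m ≤ lam)
    (hroot : 2 * lam ^ 3 - 3 * lam ^ 2 * (A + m) + A ^ 3 = 0)
    (ha : a = A / lam)
    (v dv : ℝ → ℝ)
    (hdv : IntervalIntegrable dv MeasureTheory.volume (-1) 1)
    (hdv2 : IntervalIntegrable (fun y => (dv y) ^ 2) MeasureTheory.volume (-1) 1)
    (hrep : ∀ y ∈ Set.Icc (-1 : ℝ) 1, v y = ∫ t in (-1 : ℝ)..y, dv t)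
    (hv1 : v 1 = 0)
    (hvm : ∫ y in (-1 : ℝ)..1, v y = m) :
    (∫ y in (-1 : ℝ)..1, ((dv y) ^ 2 / 2 + A * |dv y|)) ≥
      ∫ y in (-1 : ℝ)..1,
        (((if |y| ≤ a then (0 : ℝ) else A * (-y / a + Real.sign y)) ^ 2) / 2 +
          A * |if |y| ≤ a then (0 : ℝ) else A * (-y / a + Real.sign y)|) := by
  have hlam0 : 0 < lam := by linarith
  have ha0 : 0 < a := ha ▸ div_pos hA hlam0
  have ha1 : a ≤ 1 := by rw [ha, div_le_one hlam0]; linarith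
  have hprim : ∫ y in (-1 : ℝ)..1, ∫ t in (-1 : ℝ)..y, dv t = m := by
    rw [← hvm]
    refine intervalIntegral.integral_congr fun y hy ↦ (hrep y ?_).symm
    rwa [uIcc_of_le (by norm_num)] at hy
  have hmom_v : ∫ y in (-1 : ℝ)..1, y * dv y = -m := by
    rw [intervalIntegral_mul_eq_sub_integral_primitive hdv, ← hrep 1 (by norm_num), hv1, hprim]
    ring
  have hmom_w : ∫ y in (-1 : ℝ)..1, y * profileDeriv A a y = -m := by
    rw [integral_mul_profileDeriv ha0 ha1, ha]
    field_simp
    linear_combination -hroot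
  exact integral_energyDensity_profileDeriv_le hA.le ha0 (by norm_num) hdv hdv2
    (hmom_v.trans hmom_w.symm)
end

section
/- Let A, m > 0, with λ_A ≥ A+m the root of 2λ³-3λ²(A+m)+A³=0 and a = A/λ_A. Then the minimal energy I^A_m = (A²/a)(2(1-a)³/(3a) + (1-a)²) equals m·λ_A, and consequently I^A_m ≥ m(A+m) ≥ A·m. -/
/-! With `a = A / λ` the energy collapses to `(λ - A)² (2λ + A) / (3λ) = (2λ³ - 3Aλ² + A³) / (3λ)`,
and the cubic equation for `λ` says exactly that this numerator is `3λ²m`. -/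

theorem energy_div_eq {A lam : ℝ} (hA : A ≠ 0) (hlam : lam ≠ 0) :
    (A ^ 2 / (A / lam)) * (2 * (1 - A / lam) ^ 3 / (3 * (A / lam)) + (1 - A / lam) ^ 2) =
      (lam - A) ^ 2 * (2 * lam + A) / (3 * lam) := by
  field_simp
  ring

/-- With `A, m > 0`, `λ_A ≥ A+m` the root of `2λ³-3λ²(A+m)+A³=0` and
`a = A/λ_A`, the minimal energy `I^A_m = (A²/a)(2(1-a)³/(3a) + (1-a)²)`
equals `m·λ_A`, and consequently `I^A_m ≥ m(A+m) ≥ A·m`. -/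
theorem minimal_energy_value (A m lam a : ℝ) (hA : 0 < A) (hm : 0 < m)
    (hlam : A + m ≤ lam)
    (hroot : 2 * lam ^ 3 - 3 * lam ^ 2 * (A + m) + A ^ 3 = 0)
    (ha : a = A / lam) :
    (A ^ 2 / a) * (2 * (1 - a) ^ 3 / (3 * a) + (1 - a) ^ 2) = m * lam ∧
      m * (A + m) ≤ m * lam ∧ A * m ≤ m * (A + m) := by
  have hlam_pos : 0 < lam := by linarith
  subst ha
  refine ⟨?_, mul_le_mul_of_nonneg_left hlam hm.le, by nlinarith⟩
  rw [energy_div_eq hA.ne' hlam_pos.ne', div_eq_iff (by positivity)]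
  linear_combination hroot
end

section
/- Let λ > 1 and let φ: [-A_λ, A_λ] → ℝ be defined implicitly by f_λ(φ(y)) = f_λ(1/(λ-1)) - |y|, where f_λ is as above and A_λ = f_λ(1/(λ-1)) - f_λ(1/λ). Then φ satisfies, for y in the open intervals where it is differentiable, the first-order ODE φ(y)(λ - 1/√(1+|φ'(y)|²)) = 1, and 1/λ ≤ φ(y) ≤ 1/(λ-1) for all y. -/
/-- `f_λ(Z) = (λ²-1)^{-3/2} [arcsin((λ²-1)Z - λ) - λ√(1 - ((λ²-1)Z - λ)²)]`. -/
noncomputable def fl (lam Z : ℝ) : ℝ :=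
  (Real.arcsin ((lam ^ 2 - 1) * Z - lam) -
    lam * Real.sqrt (1 - ((lam ^ 2 - 1) * Z - lam) ^ 2)) /
  Real.sqrt ((lam ^ 2 - 1) ^ 3)

/-- `A_λ = f_λ(1/(λ-1)) - f_λ(1/λ)`. -/
noncomputable def Al (lam : ℝ) : ℝ := fl lam (1 / (lam - 1)) - fl lam (1 / lam)

/-!
Away from `y = 0` the implicit relation reads `f_λ(φ(τ)) = c - |τ|` near `y`, so the chain rule gives
`(f_λ'(φ(y)) φ'(y))² = 1`. On the open interval `(1/λ, 1/(λ-1))` the derivative simplifies to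
`f_λ'(Z) = (λZ - 1) / √(Z² - (λZ - 1)²)`, hence `1 + φ'(y)² = φ(y)² / (λφ(y) - 1)²`, which is the ODE.
The endpoints are excluded because `φ(y) = 1/(λ-1)` forces `y = 0` and `φ(y) = 1/λ` forces `|y| = A_λ`.
-/

open Filter Real Set Topology

lemma hasDerivAt_fl {lam Z : ℝ} (hlam : 1 < lam) (hZ : Z ∈ Ioo (1 / lam) (1 / (lam - 1))) :
    HasDerivAt (fl lam) ((lam * Z - 1) / √(Z ^ 2 - (lam * Z - 1) ^ 2)) Z := by
  obtain ⟨hZlo, hZhi⟩ := hZ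
  have ha : 0 < lam ^ 2 - 1 := by nlinarith
  have hlo : 1 < lam * Z := by rwa [div_lt_iff₀' (by linarith)] at hZlo
  have hhi : (lam - 1) * Z < 1 := by rwa [lt_div_iff₀' (by linarith)] at hZhi
  set u := (lam ^ 2 - 1) * Z - lam
  set w := Z ^ 2 - (lam * Z - 1) ^ 2
  have hw : 0 < w := by nlinarith
  -- `1 - u²` factors as `(λ² - 1) w`, which makes the arcsine argument lie in `(-1, 1)`.
  have hu : 1 - u ^ 2 = (lam ^ 2 - 1) * w := by ring
  have hu1 : 0 < 1 - u ^ 2 := by rw [hu]; positivity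
  have hlin : HasDerivAt (fun Z => (lam ^ 2 - 1) * Z - lam) (lam ^ 2 - 1) Z := by
    simpa using ((hasDerivAt_id Z).const_mul (lam ^ 2 - 1)).sub_const lam
  have harcsin := (hasDerivAt_arcsin (x := u) (by nlinarith) (by nlinarith)).comp Z hlin
  have hsqrt := (hasDerivAt_sqrt hu1.ne').comp Z ((hlin.pow 2).const_sub 1)
  refine ((harcsin.sub (hsqrt.const_mul lam)).div_const _).congr_deriv ?_
  have hst : √(1 - u ^ 2) * √((lam ^ 2 - 1) ^ 3) = (lam ^ 2 - 1) ^ 2 * √w := by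
    rw [← sqrt_mul hu1.le, hu, show (lam ^ 2 - 1) * w * (lam ^ 2 - 1) ^ 3
      = ((lam ^ 2 - 1) ^ 2) ^ 2 * w by ring, sqrt_mul (by positivity), sqrt_sq (by positivity)]
  field_simp
  rw [show √(1 - u ^ 2) * 2 * √((lam ^ 2 - 1) ^ 3) = 2 * (√(1 - u ^ 2) * √((lam ^ 2 - 1) ^ 3))
    by ring, hst]
  push_cast
  ring

lemma sq_mul_deriv_eq_one_of_comp_eventuallyEq_const_sub_abs {f φ : ℝ → ℝ} {D c y : ℝ}
    (hy : y ≠ 0) (hf : HasDerivAt f D (φ y)) (hφ : DifferentiableAt ℝ φ y)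
    (hcomp : (fun τ => f (φ τ)) =ᶠ[𝓝 y] fun τ => c - |τ|) :
    (D * deriv φ y) ^ 2 = 1 := by
  have h := (hf.comp y hφ.hasDerivAt).congr_of_eventuallyEq hcomp.symm
  rw [h.unique ((hasDerivAt_abs hy).const_sub c)]
  rcases hy.lt_or_gt with hy | hy <;> simp [hy]

lemma mem_Ioo_of_fl_eq_sub_abs {lam x y : ℝ} (hx : x ∈ Icc (1 / lam) (1 / (lam - 1)))
    (hy : |y| < Al lam) (hy0 : y ≠ 0) (h : fl lam x = fl lam (1 / (lam - 1)) - |y|) :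
    x ∈ Ioo (1 / lam) (1 / (lam - 1)) := by
  refine ⟨hx.1.lt_of_ne ?_, hx.2.lt_of_ne ?_⟩
  · rintro rfl
    unfold Al at hy
    linarith
  · rintro rfl
    exact hy0 (abs_eq_zero.mp (by linarith))

lemma mul_sub_one_div_sqrt_one_add_sq_eq_one {lam x p : ℝ} (hlam : 1 < lam)
    (hx : x ∈ Ioo (1 / lam) (1 / (lam - 1)))
    (h : ((lam * x - 1) / √(x ^ 2 - (lam * x - 1) ^ 2) * p) ^ 2 = 1) :
    x * (lam - 1 / √(1 + p ^ 2)) = 1 := by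
  obtain ⟨hxlo, hxhi⟩ := hx
  have ha : 0 < lam * x - 1 := by rw [div_lt_iff₀' (by linarith)] at hxlo; linarith
  have hhi : (lam - 1) * x < 1 := by rwa [lt_div_iff₀' (by linarith)] at hxhi
  have hx0 : 0 < x := by nlinarith
  have hw : 0 < x ^ 2 - (lam * x - 1) ^ 2 := by nlinarith
  have hp : (lam * x - 1) ^ 2 * p ^ 2 = x ^ 2 - (lam * x - 1) ^ 2 := by
    rw [mul_pow, div_pow, sq_sqrt hw.le] at h
    field_simp at h
    linarith
  have hsqrt : √(1 + p ^ 2) = x / (lam * x - 1) := by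
    rw [← sqrt_sq (div_pos hx0 ha).le]
    congr 1
    rw [div_pow, eq_div_iff (pow_pos ha 2).ne']
    linear_combination hp
  rw [hsqrt, one_div_div]
  field_simp
  ring

/-- Let `λ > 1` and let `φ : [-A_λ, A_λ] → [1/λ, 1/(λ-1)]` be defined
implicitly by `f_λ(φ(y)) = f_λ(1/(λ-1)) - |y|`.  Then `φ` satisfies
`1/λ ≤ φ ≤ 1/(λ-1)` and, at interior points `y ≠ 0` where it is
differentiable, the first-order ODE `φ(y)(λ - 1/√(1+|φ'(y)|²)) = 1`. -/
theorem implicit_profile_ode (lam : ℝ) (hlam : 1 < lam) (phi : ℝ → ℝ)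
    (hrange : ∀ y ∈ Set.Icc (-Al lam) (Al lam),
      phi y ∈ Set.Icc (1 / lam) (1 / (lam - 1)))
    (himp : ∀ y ∈ Set.Icc (-Al lam) (Al lam),
      fl lam (phi y) = fl lam (1 / (lam - 1)) - |y|) :
    (∀ y ∈ Set.Icc (-Al lam) (Al lam),
      1 / lam ≤ phi y ∧ phi y ≤ 1 / (lam - 1)) ∧
    (∀ y ∈ Set.Ioo (-Al lam) (Al lam), y ≠ 0 → DifferentiableAt ℝ phi y →
      phi y * (lam - 1 / Real.sqrt (1 + (deriv phi y) ^ 2)) = 1) := by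
  refine ⟨hrange, fun y hy hy0 hphi => ?_⟩
  have hx := mem_Ioo_of_fl_eq_sub_abs (hrange y (Ioo_subset_Icc_self hy)) (abs_lt.2 hy) hy0
    (himp y (Ioo_subset_Icc_self hy))
  have hcomp : (fun τ => fl lam (phi τ)) =ᶠ[𝓝 y] fun τ => fl lam (1 / (lam - 1)) - |τ| :=
    eventually_of_mem (Ioo_mem_nhds hy.1 hy.2) fun τ hτ => himp τ (Ioo_subset_Icc_self hτ)
  exact mul_sub_one_div_sqrt_one_add_sq_eq_one hlam hx
    (sq_mul_deriv_eq_one_of_comp_eventuallyEq_const_sub_abs hy0 (hasDerivAt_fl hlam hx) hphi hcomp)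
end
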